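/- Fix N ≥ 1 and y ∈ W_N^A. The function p_t^N(y|x) = (h_N(y)/h_N(x)) · det_{1≤i,j≤N}[p_t(y_i|x_j)] of (t, x) ∈ (0,∞) × W_N^A satisfies the backward Kolmogorov equation of the Dyson model: ∂p_t^N/∂t = (1/2) ∑_{i=1}^N ∂²p_t^N/∂x_i² + ∑_{1 ≤ i ≠ j ≤ N} (1/(x_i − x_j)) ∂p_t^N/∂x_i. -/

import Mathlib

/-!
Write `p = H D / h` with `H = h_N(y)`, `h = h_N(x)`, `D = det[p_t(y_i|x_j)]`. Column `j` of the
matrix solves the heat equation in `x_j`, so multilinearity of the determinant gives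
`∂_t D = ½ Δ D`. Dividing by `h` is Doob's h-transform: for `f = g / q` in one variable,
`½ f'' + (q'/q) f' = (½ g'' − ½ g q''/q) / q`. Along the coordinate `x_i`, `h` is a constant
multiple of `q_i(r) = ∏_{j ≠ i} (r − x_j)`, so `q_i'/q_i` is the drift `∑_{j ≠ i} 1/(x_i − x_j)`,
while `∑_i q_i''/q_i` is the sum of `1/((x_i − x_j)(x_i − x_k))` over ordered triples of distinct
indices, which vanishes because its cyclic sums do. So the Dyson generator maps `p` to
`(H/h) ½ Δ D = ∂_t p`.
-/

/-- The one-dimensional Gaussian heat kernel `p_t(b|a)`. -/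
noncomputable def heatKer (t b a : ℝ) : ℝ :=
  (1 / Real.sqrt (2 * Real.pi * t)) * Real.exp (-(a - b) ^ 2 / (2 * t))

/-- The product of differences `h_N(x) = ∏_{1 ≤ i < j ≤ N} (x_j − x_i)`. -/
noncomputable def prodDiff (N : ℕ) (x : Fin N → ℝ) : ℝ :=
  ∏ i : Fin N, ∏ j ∈ Finset.Ioi i, (x j - x i)

/-- The noncolliding BM transition density
`p_t^N(y|x) = (h_N(y)/h_N(x)) det_{1≤i,j≤N}[p_t(y_i|x_j)]`, as a function of `(t, x)`. -/
noncomputable def noncollidingDensity (N : ℕ) (y : Fin N → ℝ) (t : ℝ) (x : Fin N → ℝ) : ℝ :=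
  (prodDiff N y / prodDiff N x) * Matrix.det (Matrix.of fun i j => heatKer t (y i) (x j))

open Finset Function

noncomputable def heatKer' (t b a : ℝ) : ℝ :=
  heatKer t b a * (-(a - b) / t)

noncomputable def heatKer'' (t b a : ℝ) : ℝ :=
  heatKer t b a * ((a - b) ^ 2 / t ^ 2 - 1 / t)

theorem hasDerivAt_heatKer (t b a : ℝ) : HasDerivAt (heatKer t b) (heatKer' t b a) a := by
  have hquad : HasDerivAt (fun a => -(a - b) ^ 2 / (2 * t)) (-(a - b) / t) a := by
    refine ((((hasDerivAt_id' a).sub_const b).fun_pow 2).fun_neg.div_const (2 * t)).congr_deriv ?_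
    rcases eq_or_ne t 0 with rfl | ht
    · simp
    · field_simp; ring
  exact (hquad.exp.const_mul _).congr_deriv (by unfold heatKer' heatKer; ring)

theorem hasDerivAt_heatKer' (t b a : ℝ) : HasDerivAt (heatKer' t b) (heatKer'' t b a) a :=
  ((hasDerivAt_heatKer t b a).mul (((hasDerivAt_id' a).sub_const b).fun_neg.div_const t))
    |>.congr_deriv (by unfold heatKer'' heatKer'; ring)

theorem hasDerivAt_heatKer_time {t : ℝ} (ht : 0 < t) (b a : ℝ) :
    HasDerivAt (fun s => heatKer s b a) (heatKer'' t b a / 2) t := by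
  have h2πt : 0 < 2 * Real.pi * t := by positivity
  have hsqrt : HasDerivAt (fun s => Real.sqrt (2 * Real.pi * s))
      (2 * Real.pi / (2 * Real.sqrt (2 * Real.pi * t))) t :=
    ((hasDerivAt_id' t).const_mul (2 * Real.pi)).sqrt h2πt.ne' |>.congr_deriv (by ring)
  have hquad : HasDerivAt (fun s => -(a - b) ^ 2 / (2 * s)) ((a - b) ^ 2 / (2 * t ^ 2)) t :=
    ((hasDerivAt_id' t).const_mul 2).fun_inv (by positivity) |>.const_mul (-(a - b) ^ 2)
      |>.congr_deriv (by field_simp)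
      |>.congr_of_eventuallyEq (.of_forall fun s => by simp [div_eq_mul_inv])
  refine (((hsqrt.fun_inv (Real.sqrt_pos.2 h2πt).ne').fun_mul hquad.exp).congr_deriv ?_)
    |>.congr_of_eventuallyEq (.of_forall fun s => by simp [heatKer])
  have hS := Real.sq_sqrt h2πt.le
  unfold heatKer'' heatKer
  field_simp
  rw [hS]
  ring

section Determinant

variable {n : Type*} [Fintype n] [DecidableEq n]

theorem Matrix.hasDerivAt_det {𝕜 : Type*} [NontriviallyNormedField 𝕜] {A : 𝕜 → Matrix n n 𝕜}
    {A' : Matrix n n 𝕜} {t : 𝕜} (hA : ∀ i j, HasDerivAt (fun s => A s i j) (A' i j) t) :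
    HasDerivAt (fun s => (A s).det) (∑ j, ((A t).updateCol j fun i => A' i j).det) t := by
  simp only [Matrix.det_apply']
  have hterm (σ : Equiv.Perm n) : HasDerivAt (fun s => ∏ i, A s (σ i) i)
      (∑ j, (∏ i ∈ univ.erase j, A t (σ i) i) * A' (σ j) j) t := by
    simpa using HasDerivAt.fun_finsetProd fun j _ => hA (σ j) j
  refine (HasDerivAt.fun_sum fun σ _ => (hterm σ).const_mul _).congr_deriv ?_
  simp only [mul_sum]
  rw [sum_comm]
  refine sum_congr rfl fun j _ => sum_congr rfl fun σ _ => ?_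
  rw [← mul_prod_erase univ _ (mem_univ j), Matrix.updateCol_self,
    prod_congr rfl fun i hi => Matrix.updateCol_ne (ne_of_mem_erase hi)]
  ring

theorem Matrix.det_updateCol_eq_sum_adjugate {R : Type*} [CommRing R] (A : Matrix n n R) (j : n)
    (v : n → R) : (A.updateCol j v).det = ∑ k, A.adjugate j k * v k := by
  rw [← Matrix.cramer_apply, Matrix.cramer_eq_adjugate_mulVec]
  rfl

end Determinant

section ProdSub

variable {ι 𝕜 : Type*} [DecidableEq ι]

theorem hasDerivAt_prod_sub [NontriviallyNormedField 𝕜] (s : Finset ι) (z : ι → 𝕜) (r : 𝕜) :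
    HasDerivAt (fun r => ∏ j ∈ s, (r - z j)) (∑ j ∈ s, ∏ k ∈ s.erase j, (r - z k)) r := by
  simpa using HasDerivAt.fun_finsetProd fun j (_ : j ∈ s) => (hasDerivAt_id' r).sub_const (z j)

variable [Field 𝕜] {s : Finset ι} {z : ι → 𝕜} {r : 𝕜}

theorem sum_prod_erase_sub (hr : ∀ j ∈ s, r ≠ z j) :
    ∑ j ∈ s, ∏ k ∈ s.erase j, (r - z k) = (∏ j ∈ s, (r - z j)) * ∑ j ∈ s, (r - z j)⁻¹ := by
  rw [mul_sum]
  refine sum_congr rfl fun j hj => ?_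
  rw [← mul_prod_erase s _ hj, mul_comm, ← mul_assoc, inv_mul_cancel₀ (sub_ne_zero.2 (hr j hj)),
    one_mul]

theorem sum_sum_prod_erase_erase_sub (hr : ∀ j ∈ s, r ≠ z j) :
    ∑ j ∈ s, ∑ k ∈ s.erase j, ∏ l ∈ (s.erase j).erase k, (r - z l)
      = (∏ j ∈ s, (r - z j)) * ∑ j ∈ s, ∑ k ∈ s.erase j, ((r - z j) * (r - z k))⁻¹ := by
  rw [mul_sum]
  refine sum_congr rfl fun j hj => ?_
  rw [sum_prod_erase_sub fun k hk => hr k (mem_of_mem_erase hk), mul_sum, mul_sum]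
  refine sum_congr rfl fun k _ => ?_
  rw [← mul_prod_erase s _ hj, mul_inv]
  field_simp [sub_ne_zero.2 (hr j hj)]

end ProdSub

theorem cyclic_sum_inv_sub_mul_sub_eq_zero {𝕜 : Type*} [Field 𝕜] {a b c : 𝕜}
    (hab : a ≠ b) (hbc : b ≠ c) (hca : c ≠ a) :
    ((a - b) * (a - c))⁻¹ + ((b - c) * (b - a))⁻¹ + ((c - a) * (c - b))⁻¹ = 0 := by
  rw [← neg_sub c a, ← neg_sub a b, ← neg_sub b c]
  field_simp [sub_ne_zero.2 hab, sub_ne_zero.2 hbc, sub_ne_zero.2 hca]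
  ring

theorem sum_sum_sum_inv_sub_mul_inv_sub_eq_zero {ι 𝕜 : Type*} [Fintype ι] [DecidableEq ι]
    [Field 𝕜] [CharZero 𝕜] {x : ι → 𝕜} (hx : Injective x) :
    ∑ i, ∑ j ∈ univ.erase i, ∑ k ∈ (univ.erase i).erase j, ((x i - x j) * (x i - x k))⁻¹ = 0 := by
  let b (i j k : ι) : 𝕜 :=
    if j ≠ i then if k ≠ i then if k ≠ j then ((x i - x j) * (x i - x k))⁻¹ else 0 else 0 else 0
  have hcyc (i j k : ι) : b i j k + b j k i + b k i j = 0 := by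
    simp only [b]
    split_ifs with hji hki hkj
    · exact cyclic_sum_inv_sub_mul_sub_eq_zero (hx.ne (Ne.symm hji))
        (hx.ne (Ne.symm hkj)) (hx.ne hki)
    all_goals simp_all
  have hrot : ∑ i, ∑ j, ∑ k, b j k i = ∑ i, ∑ j, ∑ k, b i j k := by
    rw [sum_comm]; exact sum_congr rfl fun _ _ => sum_comm
  have hrot2 : ∑ i, ∑ j, ∑ k, b k i j = ∑ i, ∑ j, ∑ k, b i j k := by
    rw [← hrot, sum_comm]; exact sum_congr rfl fun _ _ => sum_comm
  have h3 : 3 * ∑ i, ∑ j, ∑ k, b i j k = 0 :=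
    calc 3 * ∑ i, ∑ j, ∑ k, b i j k
        = ∑ i, ∑ j, ∑ k, b i j k + ∑ i, ∑ j, ∑ k, b j k i + ∑ i, ∑ j, ∑ k, b k i j := by
          rw [hrot, hrot2]; ring
      _ = 0 := by
          simp only [← sum_add_distrib]
          exact sum_eq_zero fun i _ => sum_eq_zero fun j _ => sum_eq_zero fun k _ => hcyc i j k
  simpa only [← filter_ne', sum_filter, ite_sum_zero, b] using
    (mul_eq_zero.1 h3).resolve_left three_ne_zero

theorem prod_prod_Ioi_ite_eq_prod_erase {M ι : Type*} [CommMonoid M] [Fintype ι] [LinearOrder ι]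
    [LocallyFiniteOrderTop ι] (f : ι → M) (i : ι) :
    ∏ a, ∏ b ∈ Ioi a, (if a = i then f b else if b = i then f a else 1)
      = ∏ j ∈ univ.erase i, f j := by
  have hsplit (a b : ι) (hab : a < b) : (if a = i then f b else if b = i then f a else 1)
      = (if a = i then f b else 1) * (if b = i then f a else 1) := by
    split_ifs <;> simp_all
  have hIoi : (univ.erase i).filter (i < ·) = Ioi i := by
    ext a; simpa using fun h : i < a => h.ne'
  have hIio : (univ.erase i).filter (¬ i < ·) = univ.filter (· < i) := by
    ext a; simp only [mem_filter, mem_erase, mem_univ, and_true, true_and, not_lt]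
    exact ⟨fun h => lt_of_le_of_ne h.2 h.1, fun h => ⟨h.ne, h.le⟩⟩
  simp only [prod_congr rfl fun a _ => prod_congr rfl fun b hb => hsplit a b (mem_Ioi.1 hb),
    prod_mul_distrib, prod_ite_eq', mem_Ioi]
  rw [← prod_filter_mul_prod_filter_not (univ.erase i) (i < ·), hIoi, hIio, prod_filter]
  simp

theorem prodDiff_update_mul (N : ℕ) (x : Fin N → ℝ) (i : Fin N) (r : ℝ) :
    prodDiff N (update x i r) * ∏ j ∈ univ.erase i, (x i - x j)
      = prodDiff N x * ∏ j ∈ univ.erase i, (r - x j) := by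
  simp only [prodDiff]
  rw [← prod_prod_Ioi_ite_eq_prod_erase _ i, ← prod_prod_Ioi_ite_eq_prod_erase _ i,
    ← prod_mul_distrib, ← prod_mul_distrib]
  refine prod_congr rfl fun a _ => ?_
  rw [← prod_mul_distrib, ← prod_mul_distrib]
  refine prod_congr rfl fun b hb => ?_
  have hab : a < b := mem_Ioi.1 hb
  split_ifs with ha hb
  · subst ha; simp [update, hab.ne']; ring
  · subst hb; simp [update, hab.ne]; ring
  · simp [update, ha, hb]

theorem prodDiff_ne_zero {N : ℕ} {x : Fin N → ℝ} (hx : Injective x) : prodDiff N x ≠ 0 :=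
  prod_ne_zero_iff.2 fun _ _ => prod_ne_zero_iff.2 fun _ hj =>
    sub_ne_zero.2 (hx.ne (mem_Ioi.1 hj).ne')

theorem half_deriv_deriv_div_add_mul_deriv_div {g q g' q' : ℝ → ℝ} {g'' q'' r : ℝ}
    (hg : ∀ s, HasDerivAt g (g' s) s) (hg' : HasDerivAt g' g'' r)
    (hq : ∀ s, HasDerivAt q (q' s) s) (hq' : HasDerivAt q' q'' r) (hr : q r ≠ 0) :
    1 / 2 * deriv (deriv fun s => g s / q s) r + q' r / q r * deriv (fun s => g s / q s) r
      = (g'' - g r * q'' / q r) / (2 * q r) := by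
  have hderiv : deriv (fun s => g s / q s) =ᶠ[nhds r]
      fun s => (g' s * q s - g s * q' s) / q s ^ 2 :=
    ((hq r).continuousAt.eventually_ne hr).mono fun s hs => ((hg s).div (hq s) hs).deriv
  have h2 := ((hg'.fun_mul (hq r)).fun_sub ((hg r).fun_mul hq')).fun_div ((hq r).fun_pow 2)
    (pow_ne_zero 2 hr)
  rw [hderiv.deriv_eq, h2.deriv, hderiv.eq_of_nhds]
  field_simp
  ring

section Density

variable {N : ℕ} (y : Fin N → ℝ) (t : ℝ) (x : Fin N → ℝ)

noncomputable def heatMatrix : Matrix (Fin N) (Fin N) ℝ :=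
  Matrix.of fun i j => heatKer t (y i) (x j)

theorem noncollidingDensity_eq :
    noncollidingDensity N y t x = prodDiff N y / prodDiff N x * (heatMatrix y t x).det :=
  rfl

theorem det_heatMatrix_update (i : Fin N) (r : ℝ) :
    (heatMatrix y t (update x i r)).det
      = ∑ k, (heatMatrix y t x).adjugate i k * heatKer t (y k) r := by
  rw [← Matrix.det_updateCol_eq_sum_adjugate]
  congr 1
  ext k j
  rcases eq_or_ne j i with rfl | hj <;> simp [heatMatrix, *]

theorem hasDerivAt_det_heatMatrix_time (ht : 0 < t) :
    HasDerivAt (fun s => (heatMatrix y s x).det)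
      (1 / 2 * ∑ i, ∑ k, (heatMatrix y t x).adjugate i k * heatKer'' t (y k) (x i)) t := by
  refine (Matrix.hasDerivAt_det (A := fun s => heatMatrix y s x)
    fun k j => hasDerivAt_heatKer_time ht (y k) (x j)).congr_deriv ?_
  simp only [Matrix.det_updateCol_eq_sum_adjugate, mul_sum]
  exact sum_congr rfl fun i _ => sum_congr rfl fun k _ => by ring

theorem generator_noncollidingDensity_coord (hx : Injective x) (i : Fin N) :
    1 / 2 * deriv (deriv fun r => noncollidingDensity N y t (update x i r)) (x i)
        + (∑ j ∈ univ.erase i, 1 / (x i - x j))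
          * deriv (fun r => noncollidingDensity N y t (update x i r)) (x i)
      = prodDiff N y / (2 * prodDiff N x)
          * (∑ k, (heatMatrix y t x).adjugate i k * heatKer'' t (y k) (x i)
            - (heatMatrix y t x).det * ∑ j ∈ univ.erase i, ∑ k ∈ (univ.erase i).erase j,
                ((x i - x j) * (x i - x k))⁻¹) := by
  have hne : ∀ j ∈ univ.erase i, x i ≠ x j := fun j hj => hx.ne (ne_of_mem_erase hj).symm
  have hQ : ∏ j ∈ univ.erase i, (x i - x j) ≠ 0 :=
    prod_ne_zero_iff.2 fun j hj => sub_ne_zero.2 (hne j hj)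
  obtain ⟨κ, hκ, hprodDiff⟩ : ∃ κ ≠ 0, ∀ r,
      prodDiff N (update x i r) = κ * ∏ j ∈ univ.erase i, (r - x j) :=
    ⟨_, div_ne_zero (prodDiff_ne_zero hx) hQ, fun r => by
      rw [div_mul_eq_mul_div, eq_div_iff hQ, prodDiff_update_mul]⟩
  have hh : prodDiff N x = κ * ∏ j ∈ univ.erase i, (x i - x j) := by
    simpa using hprodDiff (x i)
  have hf : (fun r => noncollidingDensity N y t (update x i r))
      = fun r => (prodDiff N y * ∑ k, (heatMatrix y t x).adjugate i k * heatKer t (y k) r)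
          / (κ * ∏ j ∈ univ.erase i, (r - x j)) := by
    ext r
    rw [noncollidingDensity_eq, det_heatMatrix_update, hprodDiff]
    ring
  have hdet : ∑ k, (heatMatrix y t x).adjugate i k * heatKer t (y k) (x i)
      = (heatMatrix y t x).det := by
    rw [← det_heatMatrix_update, update_eq_self]
  have hdrift : ∑ j ∈ univ.erase i, 1 / (x i - x j)
      = κ * (∑ j ∈ univ.erase i, ∏ k ∈ (univ.erase i).erase j, (x i - x k))
          / (κ * ∏ j ∈ univ.erase i, (x i - x j)) := by
    rw [sum_prod_erase_sub hne, mul_div_mul_left _ _ hκ]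
    field_simp
  rw [hf, hdrift, half_deriv_deriv_div_add_mul_deriv_div
    (fun s => (HasDerivAt.fun_sum fun k _ =>
      (hasDerivAt_heatKer t (y k) s).const_mul _).const_mul _)
    ((HasDerivAt.fun_sum fun k _ => (hasDerivAt_heatKer' t (y k) (x i)).const_mul _).const_mul _)
    (fun s => (hasDerivAt_prod_sub (univ.erase i) x s).const_mul κ)
    ((HasDerivAt.fun_sum fun j _ =>
      hasDerivAt_prod_sub ((univ.erase i).erase j) x (x i)).const_mul κ)
    (mul_ne_zero hκ hQ), hdet, sum_sum_prod_erase_erase_sub hne, hh]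
  field_simp

end Density

theorem statement_10_general (N : ℕ) (y : Fin N → ℝ)
    (t : ℝ) (ht : 0 < t) (x : Fin N → ℝ) (hx : StrictMono x) :
    deriv (fun s : ℝ => noncollidingDensity N y s x) t
      = (1 / 2) * ∑ i : Fin N,
            deriv (deriv (fun r : ℝ => noncollidingDensity N y t (Function.update x i r))) (x i)
        + ∑ i : Fin N, ∑ j ∈ Finset.univ.erase i,
            (1 / (x i - x j))
              * deriv (fun r : ℝ => noncollidingDensity N y t (Function.update x i r)) (x i) := by
  have hLHS := ((hasDerivAt_det_heatMatrix_time y t x ht).const_mul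
    (prodDiff N y / prodDiff N x)).deriv
  simp only [← noncollidingDensity_eq] at hLHS
  calc _ = prodDiff N y / prodDiff N x
          * (1 / 2 * ∑ i, ∑ k, (heatMatrix y t x).adjugate i k * heatKer'' t (y k) (x i)) := hLHS
    _ = ∑ i, prodDiff N y / (2 * prodDiff N x)
          * (∑ k, (heatMatrix y t x).adjugate i k * heatKer'' t (y k) (x i)
            - (heatMatrix y t x).det * ∑ j ∈ univ.erase i, ∑ k ∈ (univ.erase i).erase j,
                ((x i - x j) * (x i - x k))⁻¹) := by
      rw [← mul_sum, sum_sub_distrib, ← mul_sum,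
        sum_sum_sum_inv_sub_mul_inv_sub_eq_zero hx.injective, mul_zero, sub_zero]
      ring
    _ = _ := by
      rw [mul_sum, ← sum_add_distrib]
      simp only [← sum_mul]
      exact sum_congr rfl fun i _ => (generator_noncollidingDensity_coord y t x hx.injective i).symm

/-- For fixed `N ≥ 1` and `y` in the Weyl chamber `W_N^A`, the function
`p_t^N(y|x)` of `(t,x) ∈ (0,∞) × W_N^A` satisfies the backward Kolmogorov equation of the
Dyson model:
`∂p/∂t = (1/2) ∑_i ∂²p/∂x_i² + ∑_{1 ≤ i ≠ j ≤ N} (1/(x_i − x_j)) ∂p/∂x_i`. -/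
theorem statement_10 (N : ℕ) (hN : 1 ≤ N) (y : Fin N → ℝ) (hy : StrictMono y)
    (t : ℝ) (ht : 0 < t) (x : Fin N → ℝ) (hx : StrictMono x) :
    deriv (fun s : ℝ => noncollidingDensity N y s x) t
      = (1 / 2) * ∑ i : Fin N,
            deriv (deriv (fun r : ℝ => noncollidingDensity N y t (Function.update x i r))) (x i)
        + ∑ i : Fin N, ∑ j ∈ Finset.univ.erase i,
            (1 / (x i - x j))
              * deriv (fun r : ℝ => noncollidingDensity N y t (Function.update x i r)) (x i) :=
  statement_10_general N y t ht x hx
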